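/- Let m ≥ 1, let M, N ⊆ [m] with M ⊊ [m] and N ≠ ∅, and let D = aΔ_M^c + cΔ_N ⊆ E^m. Then the linear right-E-code C^R_D has length |D| = (2^m−2^{|M|})·2^{|N|} and size 2^m, and the multiset {wt_Lee(c^R_D(v)) : v ∈ E^m} (with multiplicity over all 2^{2m} elements v ∈ E^m) consists of: (2^m−2^{|M|})·2^{|N|} with multiplicity 2^m(2^m−2^{m−|N|}); 2^{m+|N|−1} with multiplicity 2^m(2^{m−|M∪N|}−1); (2^m−2^{|M|})·2^{|N|−1} with multiplicity 2^m(2^{m−|N|}−2^{m−|M∪N|}); and 0 with multiplicity 2^m. -/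

import Mathlib

open Finset

/-- The simplicial complex `Δ_M ⊆ 𝔽₂^m` generated by `M ⊆ [m]`:
all vectors whose support is contained in `M`. -/
def deltaC {m : ℕ} (M : Finset (Fin m)) : Finset (Fin m → ZMod 2) :=
  Finset.univ.filter (fun w => ∀ i, w i ≠ 0 → i ∈ M)

/-- Dot product over `𝔽₂`. -/
def dotp {m : ℕ} (x y : Fin m → ZMod 2) : ZMod 2 := ∑ i, x i * y i

/-- The Gray map on a single element `a·s + c·t ↔ (s, t)` of `E = 𝔽₂ × 𝔽₂`:
`Φ(as + ct) = (t, s + t)`. -/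
def grayPair (e : ZMod 2 × ZMod 2) : Fin 2 → ZMod 2 := ![e.2, e.1 + e.2]

/-- The left codeword `c^L_D(v)` for `v = aα + cβ ↔ (α, β)`:
its coordinate at `d = (t₁, t₂) ∈ D` is `a(α·t₁) + c(β·t₁) ↔ (α·t₁, β·t₁)`. -/
def cwL {m : ℕ} (Ds : Finset ((Fin m → ZMod 2) × (Fin m → ZMod 2)))
    (v : (Fin m → ZMod 2) × (Fin m → ZMod 2)) :
    {d // d ∈ Ds} → ZMod 2 × ZMod 2 :=
  fun d => (dotp v.1 d.1.1, dotp v.2 d.1.1)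

/-- The Gray image `Φ(c^L_D(v)) ∈ 𝔽₂^{2|D|}` of the left codeword `c^L_D(v)`;
its Hamming weight (`hammingNorm`) is the Lee weight of `c^L_D(v)`. -/
def gcwL {m : ℕ} (Ds : Finset ((Fin m → ZMod 2) × (Fin m → ZMod 2)))
    (v : (Fin m → ZMod 2) × (Fin m → ZMod 2)) :
    {d // d ∈ Ds} × Fin 2 → ZMod 2 :=
  fun x => grayPair (cwL Ds v x.1) x.2

/-- The right codeword `c^R_D(v)` for `v = aα + cβ ↔ (α, β)`:
its coordinate at `d = (t₁, t₂) ∈ D` is `a(t₁·α) + c(t₂·α) ↔ (t₁·α, t₂·α)`. -/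
def cwR {m : ℕ} (Ds : Finset ((Fin m → ZMod 2) × (Fin m → ZMod 2)))
    (v : (Fin m → ZMod 2) × (Fin m → ZMod 2)) :
    {d // d ∈ Ds} → ZMod 2 × ZMod 2 :=
  fun d => (dotp d.1.1 v.1, dotp d.1.2 v.1)

/-- The Gray image `Φ(c^R_D(v)) ∈ 𝔽₂^{2|D|}` of the right codeword `c^R_D(v)`;
its Hamming weight (`hammingNorm`) is the Lee weight of `c^R_D(v)`. -/
def gcwR {m : ℕ} (Ds : Finset ((Fin m → ZMod 2) × (Fin m → ZMod 2)))
    (v : (Fin m → ZMod 2) × (Fin m → ZMod 2)) :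
    {d // d ∈ Ds} × Fin 2 → ZMod 2 :=
  fun x => grayPair (cwR Ds v x.1) x.2

/-!
The Lee weight of `c^R_D(aα + cβ)` depends only on `α`. Translating by `e_i` with `α_i = 1` flips
`t ↦ t·α`, so on any set stable under this translation `t·α` takes the values `0` and `1` equally
often. If `α` does not vanish on `N`, this applies to `Δ_N`, and each `t₁` contributes exactly
`|Δ_N|` to the weight, whatever `t₁·α` is. Otherwise `t₂·α = 0` on `Δ_N`, and the weight is
`|Δ_N|` times the number of `t₁ ∈ Δ_M^c` with `t₁·α = 1`: half of `2^m` (for `α ≠ 0`) minus either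
nothing (`α` vanishes on `M`) or half of `2^|M|`. This splits the `α` into the four classes
`α ∉ Δ_{N^c}`, `α ∈ Δ_{(M∪N)^c} ∖ {0}`, `α ∈ Δ_{N^c} ∖ Δ_{(M∪N)^c}` and `α = 0`; each `α` is hit by
`2^m` choices of `β`. Since `M ≠ [m]`, the products `t·α` with `t ∈ Δ_M^c` determine `α`, so the
code has `2^m` codewords.
-/

theorem Multiset.map_apply_fst_product {α β γ : Type*} (s : Multiset α) (t : Multiset γ)
    (f : α → β) : (s ×ˢ t).map (fun x => f x.1) = Multiset.card t • s.map f := by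
  induction s using Multiset.induction_on with
  | empty => simp
  | cons a s ih =>
    rw [Multiset.cons_product, Multiset.map_add, ih, Multiset.map_map, Multiset.map_cons,
      Multiset.nsmul_cons, Multiset.nsmul_singleton]
    simp only [Multiset.map_const', Function.comp_def]

theorem Finset.univ_val_map_fst {α β γ : Type*} [Fintype α] [Fintype γ] (f : α → β) :
    (univ : Finset (α × γ)).val.map (fun x => f x.1) = Fintype.card γ • univ.val.map f := by
  rw [← univ_product_univ, product_val, Multiset.map_apply_fst_product, card_val, card_univ]

theorem Finset.val_sdiff_add_val {α : Type*} [DecidableEq α] {s t : Finset α} (h : s ⊆ t) :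
    (t \ s).val + s.val = t.val := by
  rw [Finset.sdiff_val, tsub_add_cancel_of_le (Finset.val_le_iff.2 h)]

theorem Finset.val_map_eq_replicate {α β : Type*} {s : Finset α} {f : α → β} {b : β}
    (h : ∀ x ∈ s, f x = b) : s.val.map f = Multiset.replicate #s b := by
  rw [Multiset.map_congr rfl h, Multiset.map_const', Finset.card_val]

theorem Finset.univ_val_eq_of_subset {ι : Type*} [Fintype ι] [DecidableEq ι] {A B : Finset ι}
    (hBA : B ⊆ A) {z : ι} (hz : z ∈ B) :
    (univ : Finset ι).val = (univ \ A).val + (B \ {z}).val + (A \ B).val + ({z} : Finset ι).val := by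
  rw [← val_sdiff_add_val (subset_univ A), ← val_sdiff_add_val hBA,
    ← val_sdiff_add_val (singleton_subset_iff.2 hz)]
  abel

section

variable {m : ℕ}

theorem dotp_eq_dotProduct (x y : Fin m → ZMod 2) : dotp x y = x ⬝ᵥ y := rfl

theorem mem_deltaC {S : Finset (Fin m)} {w : Fin m → ZMod 2} :
    w ∈ deltaC S ↔ ∀ i, w i ≠ 0 → i ∈ S := by
  simp [deltaC]

theorem mem_deltaC_compl {S : Finset (Fin m)} {w : Fin m → ZMod 2} :
    w ∈ deltaC Sᶜ ↔ ∀ i ∈ S, w i = 0 := by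
  simp only [mem_deltaC, Finset.mem_compl]
  exact ⟨fun h i hi => by_contra fun hw => h i hw hi, fun h i hw hi => hw (h i hi)⟩

theorem card_deltaC (S : Finset (Fin m)) : #(deltaC S) = 2 ^ #S := by
  have : deltaC S = Fintype.piFinset fun i => if i ∈ S then univ else {0} := by
    ext w
    simp only [mem_deltaC, Fintype.mem_piFinset]
    refine forall_congr' fun i => ?_
    split_ifs with hi <;> simp [hi]
  rw [this, Fintype.card_piFinset]
  simp [apply_ite, Finset.prod_ite_mem]

theorem zero_mem_deltaC (S : Finset (Fin m)) : 0 ∈ deltaC S := by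
  simp [mem_deltaC]

theorem deltaC_mono {S T : Finset (Fin m)} (h : S ⊆ T) : deltaC S ⊆ deltaC T :=
  fun _ hw => mem_deltaC.2 fun i hi => h (mem_deltaC.1 hw i hi)

theorem add_single_mem_deltaC {S : Finset (Fin m)} {i : Fin m} (hi : i ∈ S)
    {t : Fin m → ZMod 2} (ht : t ∈ deltaC S) : t + Pi.single i 1 ∈ deltaC S := by
  refine mem_deltaC.2 fun j hj => ?_
  by_cases hji : j = i
  · exact hji ▸ hi
  · exact mem_deltaC.1 ht j (by simpa [hji] using hj)

theorem dotp_eq_zero_of_mem_deltaC {S : Finset (Fin m)} {t α : Fin m → ZMod 2}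
    (ht : t ∈ deltaC S) (hα : α ∈ deltaC Sᶜ) : dotp t α = 0 := by
  refine Finset.sum_eq_zero fun i _ => ?_
  by_cases hti : t i = 0
  · rw [hti, zero_mul]
  · rw [mem_deltaC_compl.1 hα i (mem_deltaC.1 ht i hti), mul_zero]

theorem two_mul_sum_dotp {T : Finset (Fin m → ZMod 2)} {α : Fin m → ZMod 2} {i : Fin m}
    (hα : α i ≠ 0) (hT : ∀ t ∈ T, t + Pi.single i 1 ∈ T) (g : ZMod 2 → ℕ) :
    2 * ∑ t ∈ T, g (dotp t α) = #T * (g 0 + g 1) := by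
  have hαi : α i = 1 := (by decide : ∀ z : ZMod 2, z ≠ 0 → z = 1) _ hα
  have hflip : ∀ t, dotp (t + Pi.single i 1) α = dotp t α + 1 := by
    simp [dotp_eq_dotProduct, add_dotProduct, single_dotProduct, hαi]
  have hinv : ∀ t ∈ T, t + Pi.single i 1 + Pi.single i 1 = t := fun t _ => by
    ext j
    simp only [Pi.add_apply, add_assoc, CharTwo.add_self_eq_zero, add_zero]
  have hshift : ∑ t ∈ T, g (dotp t α + 1) = ∑ t ∈ T, g (dotp t α) :=
    Finset.sum_nbij' _ _ hT hT hinv hinv fun t _ => by rw [hflip]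
  have hpair : ∀ x : ZMod 2, g x + g (x + 1) = g 0 + g 1 := by
    intro x; fin_cases x
    · rfl
    · exact add_comm _ _
  calc 2 * ∑ t ∈ T, g (dotp t α)
      = ∑ t ∈ T, (g (dotp t α) + g (dotp t α + 1)) := by
        rw [Finset.sum_add_distrib, hshift, two_mul]
    _ = #T * (g 0 + g 1) := by simp [hpair]

/-- Lee weight of `c^R_D(aα + cβ)` for `D = aT₁ + cT₂`: the Gray image of the coordinate
`(s, t) = (t₁·α, t₂·α)` is `(t, s + t)`. -/
def rightLeeWeight (T₁ T₂ : Finset (Fin m → ZMod 2)) (α : Fin m → ZMod 2) : ℕ :=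
  ∑ t₁ ∈ T₁, ∑ t₂ ∈ T₂, ((dotp t₂ α).val + (dotp t₁ α + dotp t₂ α).val)

theorem hammingNorm_gcwR_product (T₁ T₂ : Finset (Fin m → ZMod 2))
    (v : (Fin m → ZMod 2) × (Fin m → ZMod 2)) :
    hammingNorm (gcwR (T₁ ×ˢ T₂) v) = rightLeeWeight T₁ T₂ v.1 := by
  have hpair : ∀ s t : ZMod 2,
      ((if t ≠ 0 then 1 else 0) + if s + t ≠ 0 then 1 else 0) = t.val + (s + t).val := by
    decide
  rw [hammingNorm, card_filter, Fintype.sum_prod_type, rightLeeWeight,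
    ← sum_product' (f := fun t₁ t₂ => (dotp t₂ v.1).val + (dotp t₁ v.1 + dotp t₂ v.1).val),
    ← sum_coe_sort (T₁ ×ˢ T₂)]
  refine sum_congr rfl fun d _ => ?_
  simp only [Fin.sum_univ_two, gcwR, grayPair, cwR, Matrix.cons_val_zero, Matrix.cons_val_one,
    Matrix.cons_val_fin_one]
  exact hpair _ _

theorem rightLeeWeight_of_ne_zero_of_stable {T₁ T₂ : Finset (Fin m → ZMod 2)}
    {α : Fin m → ZMod 2} {i : Fin m} (hα : α i ≠ 0)
    (hT₂ : ∀ t ∈ T₂, t + Pi.single i 1 ∈ T₂) :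
    rightLeeWeight T₁ T₂ α = #T₁ * #T₂ := by
  have hinner : ∀ s : ZMod 2, ∑ t₂ ∈ T₂, ((dotp t₂ α).val + (s + dotp t₂ α).val) = #T₂ := by
    intro s
    have hg : (0 : ZMod 2).val + (s + 0).val + ((1 : ZMod 2).val + (s + 1).val) = 2 := by
      revert s; decide
    have := two_mul_sum_dotp hα hT₂ fun x => x.val + (s + x).val
    rw [hg] at this
    omega
  simp only [rightLeeWeight, hinner, sum_const, smul_eq_mul]

theorem rightLeeWeight_of_dotp_eq_zero {T₁ T₂ : Finset (Fin m → ZMod 2)}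
    {α : Fin m → ZMod 2} (h : ∀ t ∈ T₂, dotp t α = 0) :
    rightLeeWeight T₁ T₂ α = #T₂ * ∑ t ∈ T₁, (dotp t α).val := by
  rw [rightLeeWeight, mul_sum]
  refine sum_congr rfl fun t₁ _ => ?_
  rw [sum_congr rfl fun t₂ ht₂ => by rw [h t₂ ht₂, add_zero, ZMod.val_zero, zero_add]]
  rw [sum_const, smul_eq_mul]

theorem rightLeeWeight_zero (T₁ T₂ : Finset (Fin m → ZMod 2)) : rightLeeWeight T₁ T₂ 0 = 0 := by
  simp [rightLeeWeight, dotp]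

theorem two_mul_sum_val_dotp {α : Fin m → ZMod 2} (hα : α ≠ 0) :
    2 * ∑ t, (dotp t α).val = 2 ^ m := by
  obtain ⟨i, hi⟩ := Function.ne_iff.1 hα
  simpa [ZMod.val_one] using two_mul_sum_dotp (T := univ) hi (fun t _ => mem_univ _) ZMod.val

theorem two_mul_sum_val_dotp_deltaC {S : Finset (Fin m)} {α : Fin m → ZMod 2} {i : Fin m}
    (hi : i ∈ S) (hα : α i ≠ 0) : 2 * ∑ t ∈ deltaC S, (dotp t α).val = 2 ^ #S := by
  simpa [ZMod.val_one, card_deltaC] using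
    two_mul_sum_dotp hα (fun t ht => add_single_mem_deltaC hi ht) ZMod.val

theorem sum_val_dotp_deltaC_eq_zero {S : Finset (Fin m)} {α : Fin m → ZMod 2}
    (hα : α ∈ deltaC Sᶜ) : ∑ t ∈ deltaC S, (dotp t α).val = 0 :=
  sum_eq_zero fun t ht => by rw [dotp_eq_zero_of_mem_deltaC ht hα, ZMod.val_zero]

theorem card_compl_deltaC (S : Finset (Fin m)) : #(deltaC S)ᶜ = 2 ^ m - 2 ^ #S := by
  simp [card_compl, card_deltaC]

theorem card_deltaC_compl (S : Finset (Fin m)) : #(deltaC Sᶜ) = 2 ^ (m - #S) := by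
  rw [card_deltaC, card_compl, Fintype.card_fin]

section WeightClasses

variable {M N : Finset (Fin m)} {α : Fin m → ZMod 2}

theorem rightLeeWeight_of_notMem_deltaC_compl (hα : α ∉ deltaC Nᶜ) :
    rightLeeWeight (deltaC M)ᶜ (deltaC N) α = (2 ^ m - 2 ^ #M) * 2 ^ #N := by
  obtain ⟨i, hiN, hi⟩ : ∃ i ∈ N, α i ≠ 0 := by simpa [mem_deltaC_compl] using hα
  rw [rightLeeWeight_of_ne_zero_of_stable hi fun t ht => add_single_mem_deltaC hiN ht,
    card_compl_deltaC, card_deltaC]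

theorem rightLeeWeight_of_mem_deltaC_compl (hα : α ∈ deltaC Nᶜ) :
    rightLeeWeight (deltaC M)ᶜ (deltaC N) α = 2 ^ #N * ∑ t ∈ (deltaC M)ᶜ, (dotp t α).val := by
  rw [rightLeeWeight_of_dotp_eq_zero fun t ht => dotp_eq_zero_of_mem_deltaC ht hα, card_deltaC]

theorem rightLeeWeight_of_mem_deltaC_compl_union (hα : α ∈ deltaC (M ∪ N)ᶜ \ {0}) :
    rightLeeWeight (deltaC M)ᶜ (deltaC N) α = 2 ^ (m + #N - 1) := by
  obtain ⟨hαMN, hα0⟩ := mem_sdiff.1 hα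
  have hαM : α ∈ deltaC Mᶜ := deltaC_mono (compl_subset_compl.2 subset_union_left) hαMN
  have hαN : α ∈ deltaC Nᶜ := deltaC_mono (compl_subset_compl.2 subset_union_right) hαMN
  have hsplit := sum_compl_add_sum (deltaC M) fun t => (dotp t α).val
  have huniv := two_mul_sum_val_dotp (notMem_singleton.1 hα0)
  rw [sum_val_dotp_deltaC_eq_zero hαM, add_zero] at hsplit
  rw [rightLeeWeight_of_mem_deltaC_compl hαN, hsplit]
  cases m with
  | zero => rw [pow_zero] at huniv; omega
  | succ k =>
    rw [pow_succ] at huniv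
    rw [show k + 1 + #N - 1 = #N + k by omega, pow_add]
    congr 1
    omega

theorem rightLeeWeight_of_mem_sdiff (hN : N ≠ ∅) (hα : α ∈ deltaC Nᶜ \ deltaC (M ∪ N)ᶜ) :
    rightLeeWeight (deltaC M)ᶜ (deltaC N) α = (2 ^ m - 2 ^ #M) * 2 ^ (#N - 1) := by
  obtain ⟨hαN, hαMN⟩ := mem_sdiff.1 hα
  obtain ⟨i, hiM, hi⟩ : ∃ i ∈ M, α i ≠ 0 := by
    simp only [mem_deltaC_compl] at hαN hαMN
    push Not at hαMN
    obtain ⟨i, hiMN, hi⟩ := hαMN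
    exact ⟨i, (mem_union.1 hiMN).resolve_right fun hiN => hi (hαN i hiN), hi⟩
  have hsplit := sum_compl_add_sum (deltaC M) fun t => (dotp t α).val
  have huniv := two_mul_sum_val_dotp (α := α) fun h => hi (by simp [h])
  have hM := two_mul_sum_val_dotp_deltaC hiM hi
  have hpow : 2 ^ #N = 2 * 2 ^ (#N - 1) := by
    rw [← pow_succ', Nat.sub_add_cancel (card_pos.2 (nonempty_iff_ne_empty.2 hN))]
  have htwice : 2 * ∑ t ∈ (deltaC M)ᶜ, (dotp t α).val = 2 ^ m - 2 ^ #M := by omega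
  rw [rightLeeWeight_of_mem_deltaC_compl hαN, hpow, ← htwice]
  ring

end WeightClasses

theorem eq_zero_of_dotp_eq_zero_of_notMem_deltaC {M : Finset (Fin m)} (hM : M ≠ univ)
    {δ : Fin m → ZMod 2} (h : ∀ t ∉ deltaC M, dotp t δ = 0) : δ = 0 := by
  obtain ⟨j, hj⟩ : ∃ j, j ∉ M := by simpa [eq_univ_iff_forall] using hM
  have hδj : δ j = 0 := by
    have hej : Pi.single j 1 ∉ deltaC M := fun h' => hj (mem_deltaC.1 h' j (by simp))
    simpa [dotp_eq_dotProduct, single_dotProduct] using h _ hej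
  ext i
  by_cases hij : i = j
  · rw [hij, hδj, Pi.zero_apply]
  · have heij : Pi.single i 1 + Pi.single j 1 ∉ deltaC M :=
      fun h' => hj (mem_deltaC.1 h' j (by simp [Ne.symm hij]))
    simpa [dotp_eq_dotProduct, add_dotProduct, single_dotProduct, hδj] using h _ heij

theorem card_image_cwR {M : Finset (Fin m)} (hM : M ≠ univ) (N : Finset (Fin m)) :
    #(univ.image (cwR ((deltaC M)ᶜ ×ˢ deltaC N))) = 2 ^ m := by
  set Ds := (deltaC M)ᶜ ×ˢ deltaC N
  have hfst : univ.image (cwR Ds) = univ.image fun α => cwR Ds (α, 0) := by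
    ext c
    simp only [mem_image, mem_univ, true_and]
    exact ⟨fun ⟨v, hv⟩ => ⟨v.1, hv⟩, fun ⟨α, hα⟩ => ⟨(α, 0), hα⟩⟩
  have hinj : Function.Injective fun α => cwR Ds (α, 0) := by
    intro α α' h
    refine sub_eq_zero.1 (eq_zero_of_dotp_eq_zero_of_notMem_deltaC hM fun t ht => ?_)
    have hd : (t, 0) ∈ Ds := mem_product.2 ⟨mem_compl.2 ht, zero_mem_deltaC N⟩
    have := congrArg Prod.fst (congrFun h ⟨(t, 0), hd⟩)
    rw [dotp_eq_dotProduct, dotProduct_sub, sub_eq_zero]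
    exact this
  rw [hfst, card_image_of_injective _ hinj]
  simp

end

theorem stmt_11_general {m : ℕ} (M N : Finset (Fin m))
    (hMu : M ≠ Finset.univ) (hN : N ≠ ∅)
    (Ds : Finset ((Fin m → ZMod 2) × (Fin m → ZMod 2)))
    (hDs : Ds = (deltaC M)ᶜ ×ˢ deltaC N) :
    Ds.card = (2 ^ m - 2 ^ M.card) * 2 ^ N.card ∧
    ((Finset.univ : Finset ((Fin m → ZMod 2) × (Fin m → ZMod 2))).image (cwR Ds)).card = 2 ^ m ∧
    (Finset.univ : Finset ((Fin m → ZMod 2) × (Fin m → ZMod 2))).val.map (fun v => hammingNorm (gcwR Ds v)) =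
      Multiset.replicate (2 ^ m * (2 ^ m - 2 ^ (m - N.card)))
          ((2 ^ m - 2 ^ M.card) * 2 ^ N.card) +
      Multiset.replicate (2 ^ m * (2 ^ (m - (M ∪ N).card) - 1))
          (2 ^ (m + N.card - 1)) +
      Multiset.replicate (2 ^ m * (2 ^ (m - N.card) - 2 ^ (m - (M ∪ N).card)))
          ((2 ^ m - 2 ^ M.card) * 2 ^ (N.card - 1)) +
      Multiset.replicate (2 ^ m)
          (0) := by
  subst hDs
  refine ⟨by rw [card_product, card_compl_deltaC, card_deltaC], card_image_cwR hMu N, ?_⟩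
  have hBA : deltaC (M ∪ N)ᶜ ⊆ deltaC Nᶜ := deltaC_mono (compl_subset_compl.2 subset_union_right)
  simp_rw [hammingNorm_gcwR_product]
  rw [univ_val_map_fst, univ_val_eq_of_subset hBA (zero_mem_deltaC _)]
  simp only [Multiset.map_add]
  rw [val_map_eq_replicate fun α hα => rightLeeWeight_of_notMem_deltaC_compl (mem_sdiff.1 hα).2,
    val_map_eq_replicate fun α hα => rightLeeWeight_of_mem_deltaC_compl_union hα,
    val_map_eq_replicate fun α hα => rightLeeWeight_of_mem_sdiff hN hα,
    val_map_eq_replicate fun α hα => (mem_singleton.1 hα) ▸ rightLeeWeight_zero _ _]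
  simp only [smul_add, Multiset.nsmul_replicate, card_sdiff_of_subset (subset_univ _),
    card_sdiff_of_subset hBA, card_sdiff_of_subset (singleton_subset_iff.2 (zero_mem_deltaC _)),
    card_deltaC_compl, card_singleton, card_univ, Fintype.card_fun, ZMod.card, Fintype.card_fin,
    mul_one]

theorem stmt_11 {m : ℕ} (hm : 1 ≤ m) (M N : Finset (Fin m))
    (hMu : M ≠ Finset.univ) (hN : N ≠ ∅)
    (Ds : Finset ((Fin m → ZMod 2) × (Fin m → ZMod 2)))
    (hDs : Ds = (deltaC M)ᶜ ×ˢ deltaC N) :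
    Ds.card = (2 ^ m - 2 ^ M.card) * 2 ^ N.card ∧
    ((Finset.univ : Finset ((Fin m → ZMod 2) × (Fin m → ZMod 2))).image (cwR Ds)).card = 2 ^ m ∧
    (Finset.univ : Finset ((Fin m → ZMod 2) × (Fin m → ZMod 2))).val.map (fun v => hammingNorm (gcwR Ds v)) =
      Multiset.replicate (2 ^ m * (2 ^ m - 2 ^ (m - N.card)))
          ((2 ^ m - 2 ^ M.card) * 2 ^ N.card) +
      Multiset.replicate (2 ^ m * (2 ^ (m - (M ∪ N).card) - 1))
          (2 ^ (m + N.card - 1)) +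
      Multiset.replicate (2 ^ m * (2 ^ (m - N.card) - 2 ^ (m - (M ∪ N).card)))
          ((2 ^ m - 2 ^ M.card) * 2 ^ (N.card - 1)) +
      Multiset.replicate (2 ^ m)
          (0) :=
  stmt_11_general M N hMu hN Ds hDs
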